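/- arXiv:1807.03327 — 3 statements merged into one kernel-verified Lean document; each statement's English description precedes it below -/
import Mathlib

section
/- If α, β, γ are real numbers with 0 ≤ α ≤ π, 0 ≤ β ≤ π, 0 ≤ γ ≤ π, then ν(α,β,γ) ≤ 0. -/
open Real Filter

noncomputable def Lob (x : ℝ) : ℝ := -∫ t in (0:ℝ)..x, Real.log |2 * Real.sin t|

noncomputable def v8 : ℝ := 8 * Lob (Real.pi / 4)

noncomputable def nu (a b c : ℝ) : ℝ :=
  (1/2) * (Lob ((a+b+c)/2) - Lob ((a+b-c)/2) - Lob ((a-b+c)/2) - Lob ((-a+b+c)/2))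

noncomputable def Ffun (Z t1 t2 t3 t4 t5 t6 : ℝ) : ℝ :=
  Lob (Z - (t1+t2+t3)/2) + Lob (Z - (t1+t5+t6)/2) + Lob (Z - (t2+t4+t6)/2) +
    Lob (Z - (t3+t4+t5)/2) + Lob ((t1+t2+t4+t5)/2 - Z) + Lob ((t1+t3+t4+t6)/2 - Z) +
    Lob ((t2+t3+t5+t6)/2 - Z) - Lob Z

noncomputable def Umax (t1 t2 t3 t4 t5 t6 : ℝ) : ℝ :=
  max (max ((t1+t2+t3)/2) ((t1+t5+t6)/2)) (max ((t2+t4+t6)/2) ((t3+t4+t5)/2))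

noncomputable def Vmin (t1 t2 t3 t4 t5 t6 : ℝ) : ℝ :=
  min (min ((t1+t2+t4+t5)/2) ((t1+t3+t4+t6)/2)) ((t2+t3+t5+t6)/2)

noncomputable def bigV (t1 t2 t3 t4 t5 t6 : ℝ) : ℝ :=
  sSup ((fun Z => Ffun Z t1 t2 t3 t4 t5 t6) ''
      Set.Icc (Umax t1 t2 t3 t4 t5 t6) (min (Vmin t1 t2 t3 t4 t5 t6) (2 * Real.pi))) +
    nu t1 t2 t3 + nu t1 t5 t6 + nu t2 t4 t6 + nu t3 t4 t5

/-!
Differentiating in `γ` under the Lobachevsky integrals, `ν(α, β, ·)` is the integral from `0` of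
`¼ log (|cos (α - β) - cos γ| / |cos γ - cos (α + β)|)`; the constant of integration vanishes
because `Λ` is odd. Writing `cos (α ∓ β) = cos α cos β ± sin α sin β` with `sin α sin β ≥ 0`,
this density is `≤ 0` while `cos γ ≥ cos α cos β` and `≥ 0` afterwards. As `ν(α, β, π) = 0` by
the `π`-periodicity and oddness of `Λ`, the integral is `≤ 0` on all of `[0, π]`.
-/

open MeasureTheory Set

lemma log_abs_sub_div_abs_add_nonpos {p q : ℝ} (hp : 0 ≤ p) (hq : 0 ≤ q) :
    log (|p - q| / |p + q|) ≤ 0 := by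
  refine log_nonpos (by positivity) (div_le_one_of_le₀ ?_ (abs_nonneg _))
  calc |p - q| ≤ |p| + |q| := abs_sub p q
    _ = |p + q| := by rw [abs_of_nonneg hp, abs_of_nonneg hq, abs_of_nonneg (add_nonneg hp hq)]

lemma log_abs_sub_div_abs_add_nonneg {p q : ℝ} (hp : 0 ≤ p) (hq : q ≤ 0) :
    0 ≤ log (|p - q| / |p + q|) := by
  have h := log_abs_sub_div_abs_add_nonpos hp (neg_nonneg.2 hq)
  rwa [sub_neg_eq_add, ← sub_eq_add_neg, ← inv_div, log_inv, neg_nonpos] at h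

theorem intervalIntegral.integral_nonpos_of_sign_change {μ : Measure ℝ} {f : ℝ → ℝ}
    {a m b x : ℝ} (hf : IntervalIntegrable f μ a b) (hax : a ≤ x) (hxb : x ≤ b)
    (hneg : ∀ᵐ t ∂μ.restrict (Icc a m), f t ≤ 0) (hpos : ∀ᵐ t ∂μ.restrict (Icc m b), 0 ≤ f t)
    (htotal : ∫ t in a..b, f t ∂μ ≤ 0) :
    ∫ t in a..x, f t ∂μ ≤ 0 := by
  rcases le_total x m with hxm | hmx
  · have h := intervalIntegral.integral_nonneg_of_ae_restrict hax
      ((ae_restrict_of_ae_restrict_of_subset (Icc_subset_Icc_right hxm) hneg).mono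
        fun t ht => neg_nonneg.2 ht)
    rwa [intervalIntegral.integral_neg, neg_nonneg] at h
  · have htail := intervalIntegral.integral_nonneg_of_ae_restrict hxb
      (ae_restrict_of_ae_restrict_of_subset (Icc_subset_Icc_left hmx) hpos)
    have hsplit := intervalIntegral.integral_add_adjacent_intervals
      (hf.mono_set (uIcc_subset_uIcc_left (mem_uIcc_of_le hax hxb)))
      (hf.mono_set (uIcc_subset_uIcc_right (mem_uIcc_of_le hax hxb)))
    linarith

noncomputable def logTwoSin (t : ℝ) : ℝ := log |2 * sin t|

lemma Lob_eq (x : ℝ) : Lob x = -∫ t in (0:ℝ)..x, logTwoSin t := rfl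

lemma intervalIntegrable_logTwoSin_comp {g : ℝ → ℝ} {a b : ℝ} (hg : ∀ x, AnalyticAt ℝ g x) :
    IntervalIntegrable (fun c => logTwoSin (g c)) volume a b :=
  MeromorphicOn.intervalIntegrable_log_norm (f := fun c => 2 * sin (g c))
    fun x _ => (by fun_prop : AnalyticAt ℝ (fun c => 2 * sin (g c)) x).meromorphicAt

lemma intervalIntegrable_logTwoSin (a b : ℝ) : IntervalIntegrable logTwoSin volume a b :=
  intervalIntegrable_logTwoSin_comp (g := id) fun _ => analyticAt_id

lemma integral_logTwoSin_zero_pi : ∫ t in (0:ℝ)..π, logTwoSin t = 0 := by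
  have hsplit : ∀ᵐ t, t ∈ uIoc 0 π → logTwoSin t = log 2 + log (sin t) := by
    filter_upwards [Measure.ae_ne volume π] with t hne ht
    rw [uIoc_of_le pi_pos.le] at ht
    have hsin : sin t ≠ 0 := (sin_pos_of_pos_of_lt_pi ht.1 (lt_of_le_of_ne ht.2 hne)).ne'
    rw [logTwoSin, log_abs, log_mul two_ne_zero hsin]
  rw [intervalIntegral.integral_congr_ae hsplit, intervalIntegral.integral_add
    intervalIntegrable_const (g := fun t => log (sin t)) intervalIntegrable_log_sin,
    integral_log_sin_zero_pi]
  simp only [intervalIntegral.integral_const, smul_eq_mul]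
  ring

lemma logTwoSin_neg (t : ℝ) : logTwoSin (-t) = logTwoSin t := by
  simp only [logTwoSin, sin_neg, mul_neg, abs_neg]

lemma logTwoSin_periodic : Function.Periodic logTwoSin π := by
  intro t
  simp only [logTwoSin, sin_add_pi, mul_neg, abs_neg]

lemma Lob_sub_Lob (x y : ℝ) : Lob y - Lob x = -∫ t in x..y, logTwoSin t := by
  rw [Lob_eq, Lob_eq, ← intervalIntegral.integral_add_adjacent_intervals
    (intervalIntegrable_logTwoSin 0 x) (intervalIntegrable_logTwoSin x y)]
  ring

lemma Lob_neg (x : ℝ) : Lob (-x) = -Lob x := by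
  have h := intervalIntegral.integral_comp_neg (a := 0) (b := x) logTwoSin
  simp only [logTwoSin_neg, neg_zero] at h
  rw [Lob_eq, Lob_eq, intervalIntegral.integral_symm, h]

lemma Lob_periodic : Function.Periodic Lob π := by
  intro x
  have h := Lob_sub_Lob x (x + π)
  rw [logTwoSin_periodic.intervalIntegral_add_eq x 0, zero_add,
    integral_logTwoSin_zero_pi] at h
  linarith

lemma Lob_half_add_sub (u g : ℝ) :
    Lob ((u + g) / 2) - Lob (u / 2) = -(1/2) * ∫ c in (0:ℝ)..g, logTwoSin ((u + c) / 2) := by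
  have h := intervalIntegral.integral_comp_add_div (a := 0) (b := g) logTwoSin two_ne_zero (u / 2)
  simp only [← add_div, zero_div, add_zero, smul_eq_mul] at h
  rw [Lob_sub_Lob, h]
  ring

lemma Lob_half_sub_sub (u g : ℝ) :
    Lob ((u - g) / 2) - Lob (u / 2) = (1/2) * ∫ c in (0:ℝ)..g, logTwoSin ((u - c) / 2) := by
  have h := intervalIntegral.integral_comp_neg (a := 0) (b := g) fun c => logTwoSin ((u + c) / 2)
  simp only [← sub_eq_add_neg, neg_zero] at h
  rw [sub_eq_add_neg u g, Lob_half_add_sub, h, intervalIntegral.integral_symm]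
  ring

noncomputable def nuDensity (a b c : ℝ) : ℝ :=
  logTwoSin ((a - b + c) / 2) + logTwoSin ((-a + b + c) / 2)
    - logTwoSin ((a + b + c) / 2) - logTwoSin ((a + b - c) / 2)

lemma intervalIntegrable_nuDensity (a b x y : ℝ) :
    IntervalIntegrable (nuDensity a b) volume x y :=
  (((intervalIntegrable_logTwoSin_comp (by fun_prop)).add
    (intervalIntegrable_logTwoSin_comp (by fun_prop))).sub
    (intervalIntegrable_logTwoSin_comp (by fun_prop))).sub
    (intervalIntegrable_logTwoSin_comp (by fun_prop))

lemma nu_eq_integral (a b g : ℝ) : nu a b g = (1/4) * ∫ c in (0:ℝ)..g, nuDensity a b c := by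
  have hlog {f : ℝ → ℝ} (hf : ∀ z, AnalyticAt ℝ f z) :
      IntervalIntegrable (fun c => logTwoSin (f c)) volume 0 g :=
    intervalIntegrable_logTwoSin_comp hf
  have hsum : ∫ c in (0:ℝ)..g, nuDensity a b c =
      (∫ c in (0:ℝ)..g, logTwoSin ((a - b + c) / 2))
        + (∫ c in (0:ℝ)..g, logTwoSin ((-a + b + c) / 2))
        - (∫ c in (0:ℝ)..g, logTwoSin ((a + b + c) / 2))
        - ∫ c in (0:ℝ)..g, logTwoSin ((a + b - c) / 2) := by
    rw [← intervalIntegral.integral_add (hlog (by fun_prop)) (hlog (by fun_prop)),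
      ← intervalIntegral.integral_sub ((hlog (by fun_prop)).add (hlog (by fun_prop)))
        (hlog (by fun_prop)),
      ← intervalIntegral.integral_sub (((hlog (by fun_prop)).add (hlog (by fun_prop))).sub
        (hlog (by fun_prop))) (hlog (by fun_prop))]
    rfl
  have hodd : Lob ((a - b) / 2) + Lob ((-a + b) / 2) = 0 := by
    rw [show (-a + b) / 2 = -((a - b) / 2) by ring, Lob_neg, add_neg_cancel]
  rw [nu, hsum]
  linear_combination (1/2) * (Lob_half_add_sub (a + b) g - Lob_half_sub_sub (a + b) g
    - Lob_half_add_sub (a - b) g - Lob_half_add_sub (-a + b) g) - (1/2) * hodd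

lemma nu_pi (a b : ℝ) : nu a b π = 0 := by
  have h₁ : Lob ((a + b + π) / 2) = Lob ((a + b - π) / 2) := by
    rw [show (a + b + π) / 2 = (a + b - π) / 2 + π by ring, Lob_periodic]
  have h₂ : Lob ((-a + b + π) / 2) = -Lob ((a - b + π) / 2) := by
    rw [show (-a + b + π) / 2 = -((a - b + π) / 2) + π by ring, Lob_periodic, Lob_neg]
  rw [nu, h₁, h₂]
  ring

lemma logTwoSin_add_logTwoSin {s t : ℝ} (h : cos (s - t) - cos (s + t) ≠ 0) :
    logTwoSin s + logTwoSin t = log |2 * (cos (s - t) - cos (s + t))| := by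
  have hprod : 2 * sin s * (2 * sin t) = 2 * (cos (s - t) - cos (s + t)) := by
    rw [← two_mul_sin_mul_sin]; ring
  obtain ⟨hs, ht⟩ := mul_ne_zero_iff.1 (hprod ▸ mul_ne_zero two_ne_zero h)
  rw [logTwoSin, logTwoSin, ← log_mul (abs_ne_zero.2 hs) (abs_ne_zero.2 ht), ← abs_mul, hprod]

lemma nuDensity_eq_log {a b c : ℝ} (hX : cos (a - b) - cos c ≠ 0) (hY : cos c - cos (a + b) ≠ 0) :
    nuDensity a b c = log (|cos (a - b) - cos c| / |cos c - cos (a + b)|) := by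
  have h₁ := logTwoSin_add_logTwoSin (s := (a - b + c) / 2) (t := (-a + b + c) / 2)
  have h₂ := logTwoSin_add_logTwoSin (s := (a + b + c) / 2) (t := (a + b - c) / 2)
  rw [show (a - b + c) / 2 - (-a + b + c) / 2 = a - b by ring,
    show (a - b + c) / 2 + (-a + b + c) / 2 = c by ring] at h₁
  rw [show (a + b + c) / 2 - (a + b - c) / 2 = c by ring,
    show (a + b + c) / 2 + (a + b - c) / 2 = a + b by ring] at h₂
  have h2X : |2 * (cos (a - b) - cos c)| ≠ 0 := by positivity
  have h2Y : |2 * (cos c - cos (a + b))| ≠ 0 := by positivity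
  rw [nuDensity, sub_sub _ (logTwoSin _), h₁ hX, h₂ hY, ← log_div h2X h2Y, abs_mul, abs_mul,
    mul_div_mul_left _ _ (by norm_num)]

lemma ae_restrict_Icc_cos_ne (x : ℝ) : ∀ᵐ c ∂volume.restrict (Icc 0 π), cos c ≠ x := by
  rw [ae_restrict_iff' measurableSet_Icc, ae_iff]
  simp only [Classical.not_imp, not_not]
  exact Subsingleton.measure_zero (fun c hc d hd => injOn_cos hc.1 hd.1 (hc.2.trans hd.2.symm)) _

lemma nuDensity_ae_eq_log (a b : ℝ) : ∀ᵐ c ∂volume.restrict (Icc 0 π),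
    nuDensity a b c = log (|cos (a - b) - cos c| / |cos c - cos (a + b)|) := by
  filter_upwards [ae_restrict_Icc_cos_ne (cos (a - b)), ae_restrict_Icc_cos_ne (cos (a + b))]
    with c hX hY
  exact nuDensity_eq_log (sub_ne_zero.2 hX.symm) (sub_ne_zero.2 hY)

lemma cos_arccos_cos_mul_cos (a b : ℝ) : cos (arccos (cos a * cos b)) = cos a * cos b := by
  have h : |cos a * cos b| ≤ 1 := by
    rw [abs_mul]; exact mul_le_one₀ (abs_cos_le_one a) (abs_nonneg _) (abs_cos_le_one b)
  exact cos_arccos (abs_le.1 h).1 (abs_le.1 h).2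

lemma nuDensity_nonpos_ae {a b : ℝ} (hp : 0 ≤ sin a * sin b) :
    ∀ᵐ c ∂volume.restrict (Icc 0 (arccos (cos a * cos b))), nuDensity a b c ≤ 0 := by
  filter_upwards [ae_restrict_of_ae_restrict_of_subset (Icc_subset_Icc_right (arccos_le_pi _))
    (nuDensity_ae_eq_log a b), ae_restrict_mem measurableSet_Icc] with c hc hmem
  have hq : cos a * cos b ≤ cos c := cos_arccos_cos_mul_cos a b ▸
    cos_le_cos_of_nonneg_of_le_pi hmem.1 (arccos_le_pi _) hmem.2
  rw [hc, cos_sub, cos_add]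
  convert log_abs_sub_div_abs_add_nonpos hp (sub_nonneg.2 hq) using 4 <;> ring

lemma nuDensity_nonneg_ae {a b : ℝ} (hp : 0 ≤ sin a * sin b) :
    ∀ᵐ c ∂volume.restrict (Icc (arccos (cos a * cos b)) π), 0 ≤ nuDensity a b c := by
  filter_upwards [ae_restrict_of_ae_restrict_of_subset (Icc_subset_Icc_left (arccos_nonneg _))
    (nuDensity_ae_eq_log a b), ae_restrict_mem measurableSet_Icc] with c hc hmem
  have hq : cos c ≤ cos a * cos b := cos_arccos_cos_mul_cos a b ▸
    cos_le_cos_of_nonneg_of_le_pi (arccos_nonneg _) hmem.2 hmem.1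
  rw [hc, cos_sub, cos_add]
  convert log_abs_sub_div_abs_add_nonneg hp (sub_nonpos.2 hq) using 4 <;> ring

/-- ν(α,β,γ) ≤ 0 when 0 ≤ α,β,γ ≤ π. -/
theorem nu_nonpos (α β γ : ℝ)
    (hα : 0 ≤ α) (hα' : α ≤ Real.pi)
    (hβ : 0 ≤ β) (hβ' : β ≤ Real.pi)
    (hγ : 0 ≤ γ) (hγ' : γ ≤ Real.pi) :
    nu α β γ ≤ 0 := by
  have hp : 0 ≤ sin α * sin β :=
    mul_nonneg (sin_nonneg_of_nonneg_of_le_pi hα hα') (sin_nonneg_of_nonneg_of_le_pi hβ hβ')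
  have htotal : ∫ c in (0:ℝ)..π, nuDensity α β c ≤ 0 := by
    linarith [nu_eq_integral α β π, nu_pi α β]
  have h := intervalIntegral.integral_nonpos_of_sign_change (intervalIntegrable_nuDensity α β 0 π)
    hγ hγ' (nuDensity_nonpos_ae hp) (nuDensity_nonneg_ae hp) htotal
  rw [nu_eq_integral]
  linarith
end

section
/- Let θ₁,…,θ₆ be real numbers such that π < U_i < 2π for all i ∈ {1,…,4} and 0 < V_j − U_i < π for all i ∈ {1,…,4}, j ∈ {1,2,3}. Then the function Z ↦ F(Z,θ₁,…,θ₆) is strictly concave on the interval (max_i U_i, min(min_j V_j, 2π)), and there exists a unique Z₀ in this open interval such that F(Z₀,θ₁,…,θ₆) ≥ F(Z,θ₁,…,θ₆) for every Z in the closed interval [max_i U_i, min(min_j V_j, 2π)]. -/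
/-!
With `L x = log |2 sin x|` one has `F' = ∑ⱼ L (Vⱼ - Z) + L Z - ∑ᵢ L (Z - Uᵢ)` and
`F'' = cot Z - ∑ⱼ cot (Vⱼ - Z) - ∑ᵢ cot (Z - Uᵢ)`. Pairing `Uⱼ` with `Vⱼ` for `j ≤ 3` and `U₄`
with `2π - Z` writes `-F''` as a sum of terms `cot a + cot b = sin (a + b) / (sin a sin b)` with
`a, b > 0` and `a + b < π`, so `F` is strictly concave. At the left endpoint one `L (Z - Uᵢ)`
tends to `-∞`, and at the right endpoint one `L (Vⱼ - Z)` or `L Z` does, so `F'` runs from `+∞`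
to `-∞`: the maximum of `F` on the closed interval is attained inside, and only once.
-/

open Real Filter

open Topology Set MeasureTheory

noncomputable def logAbsTwoSin (x : ℝ) : ℝ := log |2 * sin x|

theorem logAbsTwoSin_eq_log_comp : logAbsTwoSin = log ∘ fun x => 2 * sin x :=
  funext fun _ => log_abs _

theorem logAbsTwoSin_le_log_two (x : ℝ) : logAbsTwoSin x ≤ log 2 := by
  rcases eq_or_ne (sin x) 0 with hx | hx
  · simpa [logAbsTwoSin, hx] using log_nonneg one_le_two
  · refine log_le_log (by positivity) ?_
    rw [abs_mul, abs_two]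
    nlinarith [abs_sin_le_one x]

theorem intervalIntegrable_logAbsTwoSin (a b : ℝ) :
    IntervalIntegrable logAbsTwoSin volume a b := by
  rw [logAbsTwoSin_eq_log_comp]
  have h2sin : AnalyticOnNhd ℝ (fun x => 2 * sin x) (uIcc a b) :=
    analyticOnNhd_const.mul analyticOnNhd_sin
  exact h2sin.meromorphicOn.intervalIntegrable_log

@[fun_prop]
theorem continuous_Lob : Continuous Lob :=
  (intervalIntegral.continuous_primitive (μ := volume) intervalIntegrable_logAbsTwoSin 0).neg

theorem hasDerivAt_logAbsTwoSin {x : ℝ} (hx : sin x ≠ 0) :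
    HasDerivAt logAbsTwoSin (cot x) x := by
  rw [logAbsTwoSin_eq_log_comp]
  refine (((hasDerivAt_sin x).const_mul 2).log (mul_ne_zero two_ne_zero hx)).congr_deriv ?_
  rw [cot_eq_cos_div_sin]
  field_simp

theorem measurable_logAbsTwoSin : Measurable logAbsTwoSin := by
  unfold logAbsTwoSin; fun_prop

theorem hasDerivAt_Lob {x : ℝ} (hx : sin x ≠ 0) : HasDerivAt Lob (-logAbsTwoSin x) x :=
  (intervalIntegral.integral_hasDerivAt_right (intervalIntegrable_logAbsTwoSin 0 x)
    measurable_logAbsTwoSin.stronglyMeasurable.stronglyMeasurableAtFilter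
    (hasDerivAt_logAbsTwoSin hx).continuousAt).fun_neg

theorem eventually_sin_ne_zero_nhdsNE (x : ℝ) : ∀ᶠ y in 𝓝[≠] x, sin y ≠ 0 := by
  refine analyticAt_sin.eventually_eq_zero_or_eventually_ne_zero.resolve_left fun h => ?_
  have hsin_eq : sin =ᶠ[𝓝 x] fun _ => 0 := h
  have hsin : sin x = 0 := hsin_eq.eq_of_nhds
  have hcos : cos x = 0 := by simpa using hsin_eq.deriv_eq
  simpa [hsin, hcos] using sin_sq_add_cos_sq x

theorem tendsto_logAbsTwoSin_nhdsNE {x : ℝ} (hx : sin x = 0) :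
    Tendsto logAbsTwoSin (𝓝[≠] x) atBot := by
  rw [logAbsTwoSin_eq_log_comp]
  refine tendsto_log_nhdsNE_zero.comp (tendsto_nhdsWithin_iff.2 ⟨?_, ?_⟩)
  · have h2sin : Continuous fun y => 2 * sin y := by fun_prop
    simpa [hx] using (h2sin.tendsto x).mono_left nhdsWithin_le_nhds
  · filter_upwards [eventually_sin_ne_zero_nhdsNE x] with y hy using mul_ne_zero two_ne_zero hy

theorem cot_two_pi_sub (x : ℝ) : cot (2 * π - x) = -cot x := by
  simp only [cot_eq_cos_div_sin, cos_two_pi_sub, sin_two_pi_sub, div_neg]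

theorem cot_add_cot_pos {a b : ℝ} (ha : 0 < a) (hb : 0 < b) (hab : a + b < π) :
    0 < cot a + cot b := by
  have hsa : 0 < sin a := sin_pos_of_pos_of_lt_pi ha (by linarith)
  have hsb : 0 < sin b := sin_pos_of_pos_of_lt_pi hb (by linarith)
  have hsum : cot a + cot b = sin (a + b) / (sin a * sin b) := by
    rw [cot_eq_cos_div_sin, cot_eq_cos_div_sin, sin_add]
    field_simp
    ring
  rw [hsum]
  exact div_pos (sin_pos_of_pos_of_lt_pi (by linarith) hab) (mul_pos hsa hsb)

/-- The function `F` of the statement, for arbitrary families `U` and `V`. -/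
noncomputable def lobF {m n : ℕ} (U : Fin m → ℝ) (V : Fin n → ℝ) (z : ℝ) : ℝ :=
  ∑ i, Lob (z - U i) + ∑ j, Lob (V j - z) - Lob z

noncomputable def lobFDeriv {m n : ℕ} (U : Fin m → ℝ) (V : Fin n → ℝ) (z : ℝ) : ℝ :=
  ∑ j, logAbsTwoSin (V j - z) + logAbsTwoSin z - ∑ i, logAbsTwoSin (z - U i)

section Derivatives

variable {m n : ℕ} (U : Fin m → ℝ) (V : Fin n → ℝ)

theorem continuous_lobF : Continuous (lobF U V) := by
  unfold lobF; fun_prop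

variable {U V} {z : ℝ} (hU : ∀ i, sin (z - U i) ≠ 0) (hV : ∀ j, sin (V j - z) ≠ 0)
  (hz : sin z ≠ 0)
include hU hV hz

theorem hasDerivAt_lobF : HasDerivAt (lobF U V) (lobFDeriv U V z) z := by
  have hUi : ∀ i ∈ Finset.univ, HasDerivAt (fun y => Lob (y - U i)) (-logAbsTwoSin (z - U i)) z :=
    fun i _ => (hasDerivAt_Lob (hU i)).comp_sub_const z (U i)
  have hVj : ∀ j ∈ Finset.univ, HasDerivAt (fun y => Lob (V j - y)) (logAbsTwoSin (V j - z)) z :=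
    fun j _ => by simpa using (hasDerivAt_Lob (hV j)).comp_const_sub (V j) z
  refine (((HasDerivAt.fun_sum hUi).add (HasDerivAt.fun_sum hVj)).sub
    (hasDerivAt_Lob hz)).congr_deriv ?_
  simp only [lobFDeriv, Finset.sum_neg_distrib]
  ring

theorem hasDerivAt_lobFDeriv :
    HasDerivAt (lobFDeriv U V) (cot z - ∑ j, cot (V j - z) - ∑ i, cot (z - U i)) z := by
  have hUi : ∀ i ∈ Finset.univ, HasDerivAt (fun y => logAbsTwoSin (y - U i)) (cot (z - U i)) z :=
    fun i _ => (hasDerivAt_logAbsTwoSin (hU i)).comp_sub_const z (U i)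
  have hVj : ∀ j ∈ Finset.univ,
      HasDerivAt (fun y => logAbsTwoSin (V j - y)) (-cot (V j - z)) z :=
    fun j _ => (hasDerivAt_logAbsTwoSin (hV j)).comp_const_sub (V j) z
  refine (((HasDerivAt.fun_sum hVj).add (hasDerivAt_logAbsTwoSin hz)).sub
    (HasDerivAt.fun_sum hUi)).congr_deriv ?_
  simp only [Finset.sum_neg_distrib]
  ring

end Derivatives

theorem tendsto_finsetSum_atBot {ι α G : Type*} [AddCommGroup G] [PartialOrder G]
    [IsOrderedAddMonoid G] {l : Filter α} {s : Finset ι} {f : ι → α → G} {C : G} {i : ι}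
    (hi : i ∈ s) (hfi : Tendsto (f i) l atBot) (hC : ∀ j ∈ s, ∀ x, f j x ≤ C) :
    Tendsto (fun x => ∑ j ∈ s, f j x) l atBot := by
  classical
  simp_rw [← Finset.add_sum_erase s _ hi]
  exact tendsto_atBot_add_right_of_ge _ _ hfi fun x =>
    Finset.sum_le_card_nsmul _ _ _ fun j hj => hC j (Finset.mem_of_mem_erase hj) x

section IntervalMax

variable {f f' : ℝ → ℝ} {a b : ℝ}

theorem exists_lt_of_eventually_deriv_pos (hf : ContinuousOn f (Icc a b))
    (hf' : ∀ x ∈ Ioo a b, HasDerivAt f (f' x) x) (hab : a < b)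
    (ha : ∀ᶠ x in 𝓝[>] a, 0 < f' x) : ∃ x ∈ Ioc a b, f a < f x := by
  obtain ⟨u, hau, hu⟩ := mem_nhdsGT_iff_exists_Ioo_subset.1 (inter_mem ha (Ioo_mem_nhdsGT hab))
  have hub : u ≤ b := ((Ioo_subset_Ioo_iff hau).1 fun x hx => (hu hx).2).2
  have hmono : StrictMonoOn f (Icc a u) := by
    refine strictMonoOn_of_hasDerivWithinAt_pos (f' := f') (convex_Icc a u)
      (hf.mono (Icc_subset_Icc_right hub)) (fun x hx => ?_) fun x hx => ?_ <;>
      rw [interior_Icc] at hx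
    · exact (hf' x (hu hx).2).hasDerivWithinAt
    · exact (hu hx).1
  exact ⟨u, ⟨hau, hub⟩, hmono (left_mem_Icc.2 hau.le) (right_mem_Icc.2 hau.le) hau⟩

theorem exists_lt_of_eventually_deriv_neg (hf : ContinuousOn f (Icc a b))
    (hf' : ∀ x ∈ Ioo a b, HasDerivAt f (f' x) x) (hab : a < b)
    (hb : ∀ᶠ x in 𝓝[<] b, f' x < 0) : ∃ x ∈ Ico a b, f b < f x := by
  obtain ⟨u, hub, hu⟩ := mem_nhdsLT_iff_exists_Ioo_subset.1 (inter_mem hb (Ioo_mem_nhdsLT hab))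
  have hau : a ≤ u := ((Ioo_subset_Ioo_iff hub).1 fun x hx => (hu hx).2).1
  have hanti : StrictAntiOn f (Icc u b) := by
    refine strictAntiOn_of_hasDerivWithinAt_neg (f' := f') (convex_Icc u b)
      (hf.mono (Icc_subset_Icc_left hau)) (fun x hx => ?_) fun x hx => ?_ <;>
      rw [interior_Icc] at hx
    · exact (hf' x (hu hx).2).hasDerivWithinAt
    · exact (hu hx).1
  exact ⟨u, ⟨hau, hub⟩, hanti (left_mem_Icc.2 hub.le) (right_mem_Icc.2 hub.le) hub⟩

theorem exists_mem_Ioo_isMaxOn_Icc (hf : ContinuousOn f (Icc a b))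
    (hf' : ∀ x ∈ Ioo a b, HasDerivAt f (f' x) x) (hab : a < b)
    (ha : ∀ᶠ x in 𝓝[>] a, 0 < f' x) (hb : ∀ᶠ x in 𝓝[<] b, f' x < 0) :
    ∃ c ∈ Ioo a b, IsMaxOn f (Icc a b) c := by
  obtain ⟨c, hc, hmax⟩ := isCompact_Icc.exists_isMaxOn (nonempty_Icc.2 hab.le) hf
  obtain ⟨x, hx, hax⟩ := exists_lt_of_eventually_deriv_pos hf hf' hab ha
  obtain ⟨y, hy, hby⟩ := exists_lt_of_eventually_deriv_neg hf hf' hab hb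
  refine ⟨c, ⟨hc.1.lt_of_ne ?_, hc.2.lt_of_ne ?_⟩, hmax⟩
  · rintro rfl
    exact (hmax (Ioc_subset_Icc_self hx)).not_gt hax
  · rintro rfl
    exact (hmax (Ico_subset_Icc_self hy)).not_gt hby

end IntervalMax

structure Admissible {n : ℕ} (U : Fin (n + 1) → ℝ) (V : Fin n → ℝ) (A B : ℝ) : Prop where
  U_mem_Ioo : ∀ i, U i ∈ Ioo π (2 * π)
  V_sub_U_mem_Ioo : ∀ i j, V j - U i ∈ Ioo 0 π
  isGreatest : IsGreatest (range U) A
  isLeast : IsLeast (insert (2 * π) (range V)) B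

namespace Admissible

variable {n : ℕ} {U : Fin (n + 1) → ℝ} {V : Fin n → ℝ} {A B z : ℝ}

theorem lt (h : Admissible U V A B) : A < B := by
  obtain ⟨i, rfl⟩ := h.isGreatest.1
  rcases h.isLeast.1 with rfl | ⟨j, rfl⟩
  · exact (h.U_mem_Ioo i).2
  · exact sub_pos.1 (h.V_sub_U_mem_Ioo i j).1

theorem sub_U_mem_Ioo (h : Admissible U V A B) (hz : z ∈ Ioc A B) (i : Fin (n + 1)) :
    z - U i ∈ Ioo 0 π := by
  have hUA : U i ≤ A := h.isGreatest.2 (mem_range_self i)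
  have hB : B ≤ 2 * π := h.isLeast.2 (mem_insert _ _)
  constructor <;> linarith [hz.1, hz.2, (h.U_mem_Ioo i).1]

theorem V_sub_mem_Ioo (h : Admissible U V A B) (hz : z ∈ Ico A B) (j : Fin n) :
    V j - z ∈ Ioo 0 π := by
  obtain ⟨i, hi⟩ := h.isGreatest.1
  have hBV : B ≤ V j := h.isLeast.2 (mem_insert_of_mem _ (mem_range_self j))
  constructor <;> linarith [hz.1, hz.2, (h.V_sub_U_mem_Ioo i j).2]

theorem two_pi_sub_mem_Ioo (h : Admissible U V A B) (hz : z ∈ Ico A B) :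
    2 * π - z ∈ Ioo 0 π := by
  obtain ⟨i, hi⟩ := h.isGreatest.1
  have hB : B ≤ 2 * π := h.isLeast.2 (mem_insert _ _)
  constructor <;> linarith [hz.1, hz.2, (h.U_mem_Ioo i).1]

theorem sin_sub_U_ne_zero (h : Admissible U V A B) (hz : z ∈ Ioc A B) (i : Fin (n + 1)) :
    sin (z - U i) ≠ 0 :=
  (sin_pos_of_mem_Ioo (h.sub_U_mem_Ioo hz i)).ne'

theorem sin_V_sub_ne_zero (h : Admissible U V A B) (hz : z ∈ Ico A B) (j : Fin n) :
    sin (V j - z) ≠ 0 :=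
  (sin_pos_of_mem_Ioo (h.V_sub_mem_Ioo hz j)).ne'

theorem sin_ne_zero (h : Admissible U V A B) (hz : z ∈ Ico A B) : sin z ≠ 0 := by
  simpa [sin_two_pi_sub] using (sin_pos_of_mem_Ioo (h.two_pi_sub_mem_Ioo hz)).ne'

theorem hasDerivAt_lobF (h : Admissible U V A B) (hz : z ∈ Ioo A B) :
    HasDerivAt (lobF U V) (lobFDeriv U V z) z :=
  _root_.hasDerivAt_lobF (h.sin_sub_U_ne_zero (Ioo_subset_Ioc_self hz))
    (h.sin_V_sub_ne_zero (Ioo_subset_Ico_self hz)) (h.sin_ne_zero (Ioo_subset_Ico_self hz))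

theorem hasDerivAt_lobFDeriv (h : Admissible U V A B) (hz : z ∈ Ioo A B) :
    HasDerivAt (lobFDeriv U V) (cot z - ∑ j, cot (V j - z) - ∑ i, cot (z - U i)) z :=
  _root_.hasDerivAt_lobFDeriv (h.sin_sub_U_ne_zero (Ioo_subset_Ioc_self hz))
    (h.sin_V_sub_ne_zero (Ioo_subset_Ico_self hz)) (h.sin_ne_zero (Ioo_subset_Ico_self hz))

theorem strictConcaveOn (h : Admissible U V A B) : StrictConcaveOn ℝ (Ioo A B) (lobF U V) := by
  refine strictConcaveOn_of_deriv2_neg (convex_Ioo A B) (continuous_lobF U V).continuousOn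
    fun z hz => ?_
  rw [interior_Ioo] at hz
  have hderiv : deriv (lobF U V) =ᶠ[𝓝 z] lobFDeriv U V :=
    eventually_of_mem (isOpen_Ioo.mem_nhds hz) fun y hy => (h.hasDerivAt_lobF hy).deriv
  rw [Function.iterate_succ_apply, Function.iterate_one, hderiv.deriv_eq,
    (h.hasDerivAt_lobFDeriv hz).deriv]
  have hpair : ∀ j : Fin n, 0 < cot (z - U j.castSucc) + cot (V j - z) := fun j => by
    have hUz := h.sub_U_mem_Ioo (Ioo_subset_Ioc_self hz) j.castSucc
    have hVz := h.V_sub_mem_Ioo (Ioo_subset_Ico_self hz) j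
    exact cot_add_cot_pos hUz.1 hVz.1 (by linarith [(h.V_sub_U_mem_Ioo j.castSucc j).2])
  have hlast : 0 < cot (z - U (Fin.last n)) + cot (2 * π - z) := by
    have hUz := h.sub_U_mem_Ioo (Ioo_subset_Ioc_self hz) (Fin.last n)
    have hz2 := h.two_pi_sub_mem_Ioo (Ioo_subset_Ico_self hz)
    exact cot_add_cot_pos hUz.1 hz2.1 (by linarith [(h.U_mem_Ioo (Fin.last n)).1])
  have hsum := Finset.sum_nonneg fun j (_ : j ∈ Finset.univ) => (hpair j).le
  rw [Finset.sum_add_distrib] at hsum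
  rw [cot_two_pi_sub] at hlast
  rw [Fin.sum_univ_castSucc]
  linarith

theorem tendsto_lobFDeriv_nhdsGT (h : Admissible U V A B) :
    Tendsto (lobFDeriv U V) (𝓝[>] A) atTop := by
  have hA : A ∈ Ico A B := left_mem_Ico.2 h.lt
  have hreg : Tendsto (fun z => ∑ j, logAbsTwoSin (V j - z) + logAbsTwoSin z) (𝓝[>] A)
      (𝓝 (∑ j, logAbsTwoSin (V j - A) + logAbsTwoSin A)) := by
    refine Tendsto.mono_left (.add (tendsto_finsetSum _ fun j _ => ?_) ?_) nhdsWithin_le_nhds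
    · exact ((hasDerivAt_logAbsTwoSin (h.sin_V_sub_ne_zero hA j)).comp_const_sub
        (V j) A).continuousAt.tendsto
    · exact (hasDerivAt_logAbsTwoSin (h.sin_ne_zero hA)).continuousAt.tendsto
  have hsing : Tendsto (fun z => ∑ i, logAbsTwoSin (z - U i)) (𝓝[>] A) atBot := by
    obtain ⟨i₀, hi₀⟩ := h.isGreatest.1
    refine tendsto_finsetSum_atBot (Finset.mem_univ i₀) ?_ fun i _ _ => logAbsTwoSin_le_log_two _
    have hshift : Tendsto (· - A) (𝓝[>] A) (𝓝[≠] (A - A)) :=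
      Tendsto.mono_left (map_subRight_nhdsNE (c := A)).le (nhdsGT_le_nhdsNE A)
    rw [hi₀]
    exact (tendsto_logAbsTwoSin_nhdsNE (by rw [sub_self, sin_zero])).comp hshift
  exact (hreg.add_atTop (tendsto_neg_atBot_atTop.comp hsing)).congr fun z => by
    simp [lobFDeriv, sub_eq_add_neg]

theorem tendsto_lobFDeriv_nhdsLT (h : Admissible U V A B) :
    Tendsto (lobFDeriv U V) (𝓝[<] B) atBot := by
  have hB : B ∈ Ioc A B := right_mem_Ioc.2 h.lt
  have hreg : Tendsto (fun z => ∑ i, logAbsTwoSin (z - U i)) (𝓝[<] B)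
      (𝓝 (∑ i, logAbsTwoSin (B - U i))) := by
    refine Tendsto.mono_left (tendsto_finsetSum _ fun i _ => ?_) nhdsWithin_le_nhds
    exact ((hasDerivAt_logAbsTwoSin (h.sin_sub_U_ne_zero hB i)).comp_sub_const
      B (U i)).continuousAt.tendsto
  have hsing : Tendsto (fun z => ∑ j, logAbsTwoSin (V j - z) + logAbsTwoSin z) (𝓝[<] B) atBot := by
    rcases h.isLeast.1 with hB2 | ⟨j₀, hj₀⟩
    · refine tendsto_atBot_add_left_of_ge _ _ (fun z => Finset.sum_le_card_nsmul _ _ _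
        fun j _ => logAbsTwoSin_le_log_two _) ?_
      rw [hB2]
      exact (tendsto_logAbsTwoSin_nhdsNE sin_two_pi).mono_left (nhdsLT_le_nhdsNE _)
    · refine tendsto_atBot_add_right_of_ge _ _ (tendsto_finsetSum_atBot (Finset.mem_univ j₀) ?_
        fun j _ _ => logAbsTwoSin_le_log_two _) logAbsTwoSin_le_log_two
      have hshift : Tendsto (V j₀ - ·) (𝓝[<] B) (𝓝[≠] (V j₀ - B)) :=
        (map_subLeft_nhdsLT (a := B)).le.trans (nhdsGT_le_nhdsNE _)
      exact (tendsto_logAbsTwoSin_nhdsNE (by rw [hj₀, sub_self, sin_zero])).comp hshift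
  exact (hsing.atBot_add hreg.neg).congr fun z => by simp [lobFDeriv, sub_eq_add_neg]

theorem existsUnique_isMaxOn (h : Admissible U V A B) :
    ∃! z, z ∈ Ioo A B ∧ IsMaxOn (lobF U V) (Icc A B) z := by
  obtain ⟨c, hc, hmax⟩ := exists_mem_Ioo_isMaxOn_Icc (continuous_lobF U V).continuousOn
    (fun z hz => h.hasDerivAt_lobF hz) h.lt (h.tendsto_lobFDeriv_nhdsGT.eventually_gt_atTop 0)
    (h.tendsto_lobFDeriv_nhdsLT.eventually_lt_atBot 0)
  refine ⟨c, ⟨hc, hmax⟩, fun y ⟨hy, hymax⟩ => ?_⟩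
  exact h.strictConcaveOn.eq_of_isMaxOn (hymax.on_subset Ioo_subset_Icc_self)
    (hmax.on_subset Ioo_subset_Icc_self) hy hc

end Admissible

theorem isGreatest_range_four {α : Type*} [LinearOrder α] (a b c d : α) :
    IsGreatest (range ![a, b, c, d]) (max (max a b) (max c d)) := by
  refine ⟨?_, ?_⟩
  · rcases max_choice (max a b) (max c d) with h | h <;> rw [h]
    · rcases max_choice a b with h' | h' <;> rw [h'] <;> simp
    · rcases max_choice c d with h' | h' <;> rw [h'] <;> simp
  · rintro x ⟨i, rfl⟩
    fin_cases i <;> simp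

theorem isLeast_insert_range_three {α : Type*} [LinearOrder α] (a b c x : α) :
    IsLeast (insert x (range ![a, b, c])) (min (min (min a b) c) x) := by
  refine ⟨?_, ?_⟩
  · rcases min_choice (min (min a b) c) x with h | h <;> rw [h]
    · rcases min_choice (min a b) c with h' | h' <;> rw [h']
      · rcases min_choice a b with h'' | h'' <;> rw [h''] <;> simp
      · simp
    · simp
  · rintro y (rfl | ⟨i, rfl⟩)
    · simp
    · fin_cases i <;> simp

/-- strict concavity of Z ↦ F(Z,θ₁,…,θ₆) and existence of a unique interior
maximum point Z₀. -/
theorem F_strictConcave_unique_max (t1 t2 t3 t4 t5 t6 : ℝ)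
    (hU : ∀ U ∈ [(t1+t2+t3)/2, (t1+t5+t6)/2, (t2+t4+t6)/2, (t3+t4+t5)/2],
      Real.pi < U ∧ U < 2 * Real.pi)
    (hVU : ∀ U ∈ [(t1+t2+t3)/2, (t1+t5+t6)/2, (t2+t4+t6)/2, (t3+t4+t5)/2],
      ∀ V ∈ [(t1+t2+t4+t5)/2, (t1+t3+t4+t6)/2, (t2+t3+t5+t6)/2],
        0 < V - U ∧ V - U < Real.pi) :
    StrictConcaveOn ℝ
      (Set.Ioo (Umax t1 t2 t3 t4 t5 t6) (min (Vmin t1 t2 t3 t4 t5 t6) (2 * Real.pi)))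
      (fun Z => Ffun Z t1 t2 t3 t4 t5 t6) ∧
    ∃! Z₀ : ℝ,
      Z₀ ∈ Set.Ioo (Umax t1 t2 t3 t4 t5 t6) (min (Vmin t1 t2 t3 t4 t5 t6) (2 * Real.pi)) ∧
      ∀ Z ∈ Set.Icc (Umax t1 t2 t3 t4 t5 t6) (min (Vmin t1 t2 t3 t4 t5 t6) (2 * Real.pi)),
        Ffun Z t1 t2 t3 t4 t5 t6 ≤ Ffun Z₀ t1 t2 t3 t4 t5 t6 := by
  set U : Fin 4 → ℝ := ![(t1+t2+t3)/2, (t1+t5+t6)/2, (t2+t4+t6)/2, (t3+t4+t5)/2]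
  set V : Fin 3 → ℝ := ![(t1+t2+t4+t5)/2, (t1+t3+t4+t6)/2, (t2+t3+t5+t6)/2]
  have hF : ∀ Z, Ffun Z t1 t2 t3 t4 t5 t6 = lobF U V Z := by
    intro Z
    simp only [Ffun, lobF, Fin.sum_univ_four, Fin.sum_univ_three, U, V, Matrix.cons_val]
    ring
  have h : Admissible U V (Umax t1 t2 t3 t4 t5 t6) (min (Vmin t1 t2 t3 t4 t5 t6) (2 * π)) := by
    refine ⟨fun i => hU _ ?_, fun i j => hVU _ ?_ _ ?_, isGreatest_range_four _ _ _ _,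
      isLeast_insert_range_three _ _ _ _⟩ <;>
    [fin_cases i; fin_cases i; fin_cases j] <;> simp [U, V]
  simp only [hF]
  exact ⟨h.strictConcaveOn, h.existsUnique_isMaxOn⟩
end

section
/- Let r ≥ 3 be odd and let (n₁,…,n₆) be an r-admissible 6-tuple satisfying 0 ≤ Q_j − T_i ≤ (r−2)/2 for all i ∈ {1,…,4}, j ∈ {1,2,3}, and (r−2)/2 ≤ T_i ≤ r−2 for all i. For an integer z define S_z = (−1)^z {z+1}! / (∏_{i=1}^4 {z−T_i}! · ∏_{j=1}^3 {Q_j−z}!), a complex number computed at q = e^{2πi/r}. Then for every integer z with max_i T_i < z ≤ min(min_j Q_j, r−2), the quotient S_z / S_{z−1} is a positive real number; in particular all the terms S_z with max_i T_i ≤ z ≤ min(min_j Q_j, r−2) are nonzero and have the same sign (as complex numbers they are positive real multiples of one another). -/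
open Real Filter

noncomputable def qq (r : ℕ) : ℂ := Complex.exp (2 * Real.pi * Complex.I / r)

noncomputable def qint (r n : ℕ) : ℂ := qq r ^ n - (qq r)⁻¹ ^ n

noncomputable def qfact (r n : ℕ) : ℂ := ∏ k ∈ Finset.Icc 1 n, qint r k

def admTriple (r a b c : ℕ) : Prop :=
  a ≤ r - 2 ∧ b ≤ r - 2 ∧ c ≤ r - 2 ∧ Even (a + b + c) ∧ a + b + c ≤ 2 * r - 4 ∧
    a ≤ b + c ∧ b ≤ a + c ∧ c ≤ a + b

def adm6 (r n1 n2 n3 n4 n5 n6 : ℕ) : Prop :=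
  admTriple r n1 n2 n3 ∧ admTriple r n1 n5 n6 ∧ admTriple r n2 n4 n6 ∧ admTriple r n3 n4 n5

noncomputable def zetaR (r : ℕ) : ℝ := 2 * Real.sin (2 * Real.pi / r)

noncomputable def branchSqrt (x : ℝ) : ℂ :=
  if 0 ≤ x then (Real.sqrt x : ℂ) else Complex.I * (Real.sqrt (-x) : ℂ)

noncomputable def qDelta (r a b c : ℕ) : ℂ :=
  branchSqrt ((Complex.I * (zetaR r : ℂ) * qfact r ((a + b - c) / 2) *
      qfact r ((a + c - b) / 2) * qfact r ((b + c - a) / 2) /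
      qfact r ((a + b + c) / 2 + 1)).re)

noncomputable def sixjSum (r n1 n2 n3 n4 n5 n6 : ℕ) : ℂ :=
  ∑ z ∈ Finset.Icc
      (max (max ((n1+n2+n3)/2) ((n1+n5+n6)/2)) (max ((n2+n4+n6)/2) ((n3+n4+n5)/2)))
      (min (min ((n1+n2+n4+n5)/2) ((n1+n3+n4+n6)/2)) ((n2+n3+n5+n6)/2)),
    (-1 : ℂ) ^ z * qfact r (z + 1) /
      (qfact r (z - (n1+n2+n3)/2) * qfact r (z - (n1+n5+n6)/2) *
       qfact r (z - (n2+n4+n6)/2) * qfact r (z - (n3+n4+n5)/2) *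
       (qfact r ((n1+n2+n4+n5)/2 - z) * qfact r ((n1+n3+n4+n6)/2 - z) *
        qfact r ((n2+n3+n5+n6)/2 - z)))

noncomputable def sixj (r n1 n2 n3 n4 n5 n6 : ℕ) : ℂ :=
  ((zetaR r : ℂ))⁻¹ * Complex.I ^ (n1 + n2 + n3 + n4 + n5 + n6) *
    (qDelta r n1 n2 n3 * qDelta r n1 n5 n6 * qDelta r n2 n4 n6 * qDelta r n3 n4 n5) *
    sixjSum r n1 n2 n3 n4 n5 n6

/-! Since `q = e^{2πi/r}`, every quantum integer is purely imaginary: `{n} = 2i·sin(2πn/r)`.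
The ratio `S_{z+1} / S_z` is `-{z+2} ∏_j {Q_j - z} / ∏_i {z + 1 - T_i}`, four imaginary factors
over four, hence real. The constraints put every argument other than `z + 2` in `(0, r/2)`, where
the sine is positive, and `z + 2` in `(r/2, r)`, where it is negative, so the ratio is positive. -/

open Finset Complex

lemma qint_eq_I_mul_sin (r n : ℕ) :
    qint r n = I * ((2 * Real.sin (2 * π * n / r) : ℝ) : ℂ) := by
  set x : ℝ := 2 * π * n / r
  have hq : qq r ^ n = exp (x * I) := by
    rw [qq, ← Complex.exp_nat_mul]; congr 1; push_cast [x]; ring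
  have hq' : (qq r)⁻¹ ^ n = exp (-x * I) := by
    rw [qq, ← Complex.exp_neg, ← Complex.exp_nat_mul]; congr 1; push_cast [x]; ring
  rw [qint, hq, hq']
  push_cast
  linear_combination (-I) * two_sin (x : ℂ) - (exp (-x * I) - exp (x * I)) * I_sq

lemma sin_two_pi_mul_div_pos {r n : ℕ} (hn : 0 < n) (h : 2 * n < r) :
    0 < Real.sin (2 * π * n / r) := by
  have hr : (0 : ℝ) < r := by exact_mod_cast (by omega : 0 < r)
  have h' : (2 * n : ℝ) < r := by exact_mod_cast h
  apply Real.sin_pos_of_pos_of_lt_pi (by positivity)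
  rw [div_lt_iff₀ hr]
  nlinarith [Real.pi_pos]

lemma sin_two_pi_mul_div_neg {r n : ℕ} (h : r < 2 * n) (h' : n < r) :
    Real.sin (2 * π * n / r) < 0 := by
  have hr : (0 : ℝ) < r := by exact_mod_cast (by omega : 0 < r)
  have h₁ : (r : ℝ) < 2 * n := by exact_mod_cast h
  have h₂ : (n : ℝ) < r := by exact_mod_cast h'
  rw [← Real.sin_sub_two_pi]
  apply Real.sin_neg_of_neg_of_neg_pi_lt
  · rw [sub_neg, div_lt_iff₀ hr]; nlinarith [Real.pi_pos]
  · rw [lt_sub_iff_add_lt, lt_div_iff₀ hr]; nlinarith [Real.pi_pos]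

variable {ι κ : Type*} [Fintype ι] [Fintype κ]

lemma neg_I_mul_prod_div_prod_eq_ofReal (hcard : Fintype.card ι = Fintype.card κ + 1)
    (a : ℝ) (b : κ → ℝ) (c : ι → ℝ) :
    -(I * a * ∏ j, I * b j) / ∏ i, I * c i = ((-(a * ∏ j, b j) / ∏ i, c i : ℝ) : ℂ) := by
  simp only [prod_mul_distrib, prod_const, card_univ, hcard]
  rw [show -(I * a * (I ^ Fintype.card κ * ∏ j, (b j : ℂ)))
      = I ^ (Fintype.card κ + 1) * -(a * ∏ j, (b j : ℂ)) by ring,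
    mul_div_mul_left _ _ (pow_ne_zero _ I_ne_zero)]
  push_cast
  rfl

lemma qint_ne_zero {r n : ℕ} (hr : Odd r) (hn : 0 < n) (h : n < r) : qint r n ≠ 0 := by
  rw [qint_eq_I_mul_sin]
  refine mul_ne_zero I_ne_zero (ofReal_ne_zero.mpr (mul_ne_zero two_ne_zero ?_))
  rcases lt_trichotomy (2 * n) r with h' | h' | h'
  · exact (sin_two_pi_mul_div_pos hn h').ne'
  · exact absurd ⟨n, by omega⟩ (Nat.not_even_iff_odd.mpr hr)
  · exact (sin_two_pi_mul_div_neg h' h).ne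

lemma qfact_succ (r n : ℕ) : qfact r (n + 1) = qfact r n * qint r (n + 1) :=
  prod_Icc_succ_top (by omega) _

lemma qfact_ne_zero {r n : ℕ} (hr : Odd r) (h : n < r) : qfact r n ≠ 0 :=
  prod_ne_zero_iff.mpr fun k hk => qint_ne_zero hr (mem_Icc.mp hk).1 (by grind)

noncomputable def sixjTerm (r : ℕ) (T : ι → ℕ) (Q : κ → ℕ) (z : ℕ) : ℂ :=
  (-1) ^ z * qfact r (z + 1) / ((∏ i, qfact r (z - T i)) * ∏ j, qfact r (Q j - z))

variable {r : ℕ} {T : ι → ℕ} {Q : κ → ℕ} {z : ℕ}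

lemma sixjTerm_ne_zero (hr : Odd r) (hz : z + 1 < r) (hQ : ∀ j, Q j - z < r) :
    sixjTerm r T Q z ≠ 0 :=
  div_ne_zero (mul_ne_zero (pow_ne_zero _ (by norm_num)) (qfact_ne_zero hr hz))
    (mul_ne_zero (prod_ne_zero_iff.mpr fun i _ => qfact_ne_zero hr (by omega))
      (prod_ne_zero_iff.mpr fun j _ => qfact_ne_zero hr (hQ j)))

lemma sixjTerm_succ (hT : ∀ i, T i ≤ z) (hQ : ∀ j, z < Q j)
    (hQne : ∀ j, qint r (Q j - z) ≠ 0) :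
    sixjTerm r T Q (z + 1) = -(qint r (z + 2) * ∏ j, qint r (Q j - z)) /
      (∏ i, qint r (z + 1 - T i)) * sixjTerm r T Q z := by
  have hT' : ∀ i, qfact r (z + 1 - T i) = qfact r (z - T i) * qint r (z + 1 - T i) := fun i => by
    rw [show z + 1 - T i = z - T i + 1 by grind, qfact_succ]
  have hQ' : ∀ j, qfact r (Q j - z) = qfact r (Q j - (z + 1)) * qint r (Q j - z) := fun j => by
    rw [show Q j - z = Q j - (z + 1) + 1 by grind, qfact_succ]
  have hu : ∏ j, qint r (Q j - z) ≠ 0 := prod_ne_zero_iff.mpr fun j _ => hQne j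
  simp only [sixjTerm, hT', hQ', prod_mul_distrib, qfact_succ (r := r) (z + 1), pow_succ]
  field_simp

lemma sixjTerm_succ_eq_pos_mul (hcard : Fintype.card ι = Fintype.card κ + 1)
    (hz : r < 2 * (z + 2)) (hzr : z + 2 < r) (hT : ∀ i, T i ≤ z ∧ 2 * (z + 1 - T i) < r)
    (hQ : ∀ j, z < Q j ∧ 2 * (Q j - z) < r) :
    ∃ c : ℝ, 0 < c ∧ sixjTerm r T Q (z + 1) = c * sixjTerm r T Q z := by
  set s : ℕ → ℝ := fun n => 2 * Real.sin (2 * π * n / r)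
  have hpos : ∀ n, 0 < n → 2 * n < r → 0 < s n := fun n hn h =>
    mul_pos two_pos (sin_two_pi_mul_div_pos hn h)
  have hneg : s (z + 2) < 0 := mul_neg_of_pos_of_neg two_pos (sin_two_pi_mul_div_neg hz hzr)
  have hQpos : ∀ j, 0 < s (Q j - z) := fun j => hpos _ (by grind) (hQ j).2
  have hTpos : ∀ i, 0 < s (z + 1 - T i) := fun i => hpos _ (by grind) (hT i).2
  refine ⟨-(s (z + 2) * ∏ j, s (Q j - z)) / ∏ i, s (z + 1 - T i),
    div_pos (neg_pos.mpr (mul_neg_of_neg_of_pos hneg (prod_pos fun j _ => hQpos j)))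
      (prod_pos fun i _ => hTpos i), ?_⟩
  have hQne : ∀ j, qint r (Q j - z) ≠ 0 := fun j => by
    rw [qint_eq_I_mul_sin]; exact mul_ne_zero I_ne_zero (ofReal_ne_zero.mpr (hQpos j).ne')
  rw [sixjTerm_succ (fun i => (hT i).1) (fun j => (hQ j).1) hQne]
  simp only [qint_eq_I_mul_sin, neg_I_mul_prod_div_prod_eq_ofReal hcard]
  rfl

lemma exists_pos_mul_of_succ_eq_pos_mul {f : ℕ → ℂ} {a b : ℕ}
    (h : ∀ k, a ≤ k → k < b → ∃ c : ℝ, 0 < c ∧ f (k + 1) = c * f k) :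
    ∀ k, a ≤ k → k ≤ b → ∃ c : ℝ, 0 < c ∧ f k = c * f a := by
  intro k hak
  induction k, hak using Nat.le_induction with
  | base => exact fun _ => ⟨1, one_pos, by simp⟩
  | succ k hak ih =>
    intro hkb
    obtain ⟨c, hc, hfk⟩ := ih (by omega)
    obtain ⟨d, hd, hfk'⟩ := h k hak hkb
    exact ⟨d * c, mul_pos hd hc, by rw [hfk', hfk]; push_cast; ring⟩

theorem sixj_terms_same_sign_general (r : ℕ) (hodd : Odd r) (hr : 3 ≤ r)
    (T1 T2 T3 T4 Q1 Q2 Q3 : ℕ)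
    (hQT : ∀ T ∈ [T1, T2, T3, T4], ∀ Q ∈ [Q1, Q2, Q3], T ≤ Q ∧ 2 * (Q - T) ≤ r - 2)
    (hT : ∀ T ∈ [T1, T2, T3, T4], r - 2 ≤ 2 * T ∧ T ≤ r - 2)
    (S : ℕ → ℂ)
    (hS : ∀ z : ℕ, S z = (-1 : ℂ) ^ z * qfact r (z + 1) /
      (qfact r (z - T1) * qfact r (z - T2) * qfact r (z - T3) * qfact r (z - T4) *
       (qfact r (Q1 - z) * qfact r (Q2 - z) * qfact r (Q3 - z)))) :
    (∀ z : ℕ, max (max T1 T2) (max T3 T4) < z → z ≤ min (min (min Q1 Q2) Q3) (r - 2) →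
      (S z / S (z - 1)).im = 0 ∧ 0 < (S z / S (z - 1)).re) ∧
    (∀ z : ℕ, max (max T1 T2) (max T3 T4) ≤ z → z ≤ min (min (min Q1 Q2) Q3) (r - 2) →
      S z ≠ 0 ∧ ∃ c : ℝ, 0 < c ∧ S z = (c : ℂ) * S (max (max T1 T2) (max T3 T4))) := by
  simp only [List.mem_cons, List.not_mem_nil, or_false, forall_eq_or_imp, forall_eq] at hQT hT
  have hS' : S = sixjTerm r ![T1, T2, T3, T4] ![Q1, Q2, Q3] := funext fun z => by
    simp [hS, sixjTerm, Fin.prod_univ_four, Fin.prod_univ_three]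
  subst hS'
  set M := max (max T1 T2) (max T3 T4)
  set B := min (min (min Q1 Q2) Q3) (r - 2)
  have hM : T1 ≤ M ∧ T2 ≤ M ∧ T3 ≤ M ∧ T4 ≤ M := by omega
  have hB : B ≤ Q1 ∧ B ≤ Q2 ∧ B ≤ Q3 ∧ B ≤ r - 2 := by omega
  clear_value M B
  have hne : ∀ z, M ≤ z → z ≤ B → sixjTerm r ![T1, T2, T3, T4] ![Q1, Q2, Q3] z ≠ 0 :=
    fun z _ _ => sixjTerm_ne_zero hodd (by omega) (by simp [Fin.forall_fin_succ]; omega)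
  have hstep : ∀ k, M ≤ k → k < B → ∃ c : ℝ, 0 < c ∧
      sixjTerm r ![T1, T2, T3, T4] ![Q1, Q2, Q3] (k + 1) =
        c * sixjTerm r ![T1, T2, T3, T4] ![Q1, Q2, Q3] k :=
    fun k _ _ => sixjTerm_succ_eq_pos_mul (by simp) (by omega) (by omega)
      (by simp [Fin.forall_fin_succ]; omega) (by simp [Fin.forall_fin_succ]; omega)
  refine ⟨fun z hMz hzB => ?_, fun z hMz hzB => ⟨hne z hMz hzB,
    exists_pos_mul_of_succ_eq_pos_mul hstep z hMz hzB⟩⟩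
  obtain ⟨k, rfl⟩ : ∃ k, z = k + 1 := ⟨z - 1, by omega⟩
  obtain ⟨c, hc, hk⟩ := hstep k (by omega) hzB
  rw [Nat.add_sub_cancel, hk, mul_div_assoc, div_self (hne k (by omega) (by omega)), mul_one]
  exact ⟨ofReal_im c, hc⟩

/-- under the growth constraints, consecutive terms S_z of the sum defining the
quantum 6j-symbol have positive real ratio; in particular all terms in the range are nonzero
(and are positive real multiples of one another). -/
theorem sixj_terms_same_sign (r : ℕ) (hodd : Odd r) (hr : 3 ≤ r)
    (n1 n2 n3 n4 n5 n6 : ℕ) (hadm : adm6 r n1 n2 n3 n4 n5 n6)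
    (T1 T2 T3 T4 Q1 Q2 Q3 : ℕ)
    (hT1 : T1 = (n1 + n2 + n3) / 2) (hT2 : T2 = (n1 + n5 + n6) / 2)
    (hT3 : T3 = (n2 + n4 + n6) / 2) (hT4 : T4 = (n3 + n4 + n5) / 2)
    (hQ1 : Q1 = (n1 + n2 + n4 + n5) / 2) (hQ2 : Q2 = (n1 + n3 + n4 + n6) / 2)
    (hQ3 : Q3 = (n2 + n3 + n5 + n6) / 2)
    (hQT : ∀ T ∈ [T1, T2, T3, T4], ∀ Q ∈ [Q1, Q2, Q3], T ≤ Q ∧ 2 * (Q - T) ≤ r - 2)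
    (hT : ∀ T ∈ [T1, T2, T3, T4], r - 2 ≤ 2 * T ∧ T ≤ r - 2)
    (S : ℕ → ℂ)
    (hS : ∀ z : ℕ, S z = (-1 : ℂ) ^ z * qfact r (z + 1) /
      (qfact r (z - T1) * qfact r (z - T2) * qfact r (z - T3) * qfact r (z - T4) *
       (qfact r (Q1 - z) * qfact r (Q2 - z) * qfact r (Q3 - z)))) :
    (∀ z : ℕ, max (max T1 T2) (max T3 T4) < z → z ≤ min (min (min Q1 Q2) Q3) (r - 2) →
      (S z / S (z - 1)).im = 0 ∧ 0 < (S z / S (z - 1)).re) ∧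
    (∀ z : ℕ, max (max T1 T2) (max T3 T4) ≤ z → z ≤ min (min (min Q1 Q2) Q3) (r - 2) →
      S z ≠ 0 ∧ ∃ c : ℝ, 0 < c ∧ S z = (c : ℂ) * S (max (max T1 T2) (max T3 T4))) :=
  sixj_terms_same_sign_general r hodd hr T1 T2 T3 T4 Q1 Q2 Q3 hQT hT S hS
end
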